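/- arXiv:0812.3084 — 3 statements merged into one kernel-verified Lean document; each statement's English description precedes it below -/
import Mathlib

section
/- Let m ∈ ℕ and p ∈ (0,1). Suppose N ∼ Bin(m,p), N' has the conditional distribution of N given N > 0, and N'' − 1 ∼ Bin(m−1,p). Then for all k ∈ ℕ, P[N ≥ k] ≤ P[N' ≥ k] ≤ P[N'' ≥ k]. -/
open MeasureTheory ProbabilityTheory Filter Set Metric
open scoped ENNReal NNReal BigOperators Topology Classical

noncomputable section

/-- Side length `n^(1/d)` of the cube `C_n` of volume `n` in dimension `d`. -/
def sideLen (d n : ℕ) : ℝ := (n : ℝ) ^ ((d : ℝ)⁻¹)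

/-- The cube `C_n = [0, L)^d`. -/
def box (d : ℕ) (L : ℝ) : Set (Fin d → ℝ) := Set.univ.pi fun _ => Set.Ico (0 : ℝ) L

/-- The Euclidean toroidal distance on the cube `[0, L)^d`. -/
def torDist {d : ℕ} (L : ℝ) (x y : Fin d → ℝ) : ℝ :=
  Real.sqrt (∑ i, (⨅ k : ℤ, |x i - y i - k * L|) ^ 2)

/-- The toroidal ball `B_r(x) = {y ∈ C_n : D(x,y) ≤ r}`. -/
def torBall {d : ℕ} (L : ℝ) (x : Fin d → ℝ) (r : ℝ) : Set (Fin d → ℝ) :=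
  {y ∈ box d L | torDist L x y ≤ r}

/-- Addition (translation) in the torus `[0, L)^d`. -/
def torAdd {d : ℕ} (L : ℝ) (y x : Fin d → ℝ) : Fin d → ℝ :=
  fun i => L * Int.fract ((y i + x i) / L)

/-- The uniform probability measure on the cube `[0, L)^d`. -/
def uniformBox (d : ℕ) (L : ℝ) : Measure (Fin d → ℝ) :=
  ((L.toNNReal ^ d)⁻¹ : ℝ≥0) • volume.restrict (box d L)

/-- The joint law of `n` independent points uniformly distributed on the cube `C_n`
of volume `n`; a point configuration is `ω : Fin n → (Fin d → ℝ)`, with `U_i = ω i`. -/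
def binppLaw (d n : ℕ) : Measure (Fin n → Fin d → ℝ) :=
  Measure.pi fun _ => uniformBox d (sideLen d n)

/-- The total covered volume `V` of the union of toroidal balls of radius `ρ`
centered at the `n` points. -/
def coveredVol (d n : ℕ) (ρ : ℝ) (ω : Fin n → Fin d → ℝ) : ℝ :=
  (volume (⋃ i, torBall (sideLen d n) (ω i) ρ)).toReal

/-- The number `S` of isolated points: indices `i` with `𝒰_n ∩ B_ρ(U_i) = {U_i}`. -/
def isolCount (d n : ℕ) (ρ : ℝ) (ω : Fin n → Fin d → ℝ) : ℝ :=
  ∑ i, if Set.range ω ∩ torBall (sideLen d n) (ω i) ρ = {ω i} then 1 else 0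

/-- `π_d`: the volume of the unit ball in `ℝ^d`. -/
def unitBallVol (d : ℕ) : ℝ :=
  (volume (Metric.closedBall (0 : EuclideanSpace ℝ (Fin d)) 1)).toReal

/-- `φ = π_d ρ^d`. -/
def phi (d : ℕ) (ρ : ℝ) : ℝ := unitBallVol d * ρ ^ d

/-- The standard normal cumulative distribution function. -/
def stdGaussCDF (t : ℝ) : ℝ := (gaussianReal 0 1 (Set.Iic t)).toReal

/-- The Kolmogorov distance `D_X` between the law of the standardized version of `X`
and the standard normal. -/
def kolDist {Ω : Type*} [MeasurableSpace Ω] (P : Measure Ω) (X : Ω → ℝ) : ℝ :=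
  ⨆ t : ℝ,
    |(P {ω | (X ω - ∫ x, X x ∂P) / Real.sqrt (variance X P) ≤ t}).toReal - stdGaussCDF t|

/-- A fixed unit vector in `ℝ^d` (junk value `0` if `d = 0`). -/
def unitVec (d : ℕ) : EuclideanSpace ℝ (Fin d) :=
  if h : 0 < d then EuclideanSpace.single (⟨0, h⟩ : Fin d) 1 else 0

/-- `ω_d(r)`: the volume of the union of two unit balls in `ℝ^d` whose centers are
at distance `r` apart. -/
def omegaVol (d : ℕ) (r : ℝ) : ℝ :=
  (volume (Metric.closedBall (0 : EuclideanSpace ℝ (Fin d)) 1 ∪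
      Metric.closedBall (r • unitVec d) 1)).toReal

/-- The integral `J_{r,d}(ρ) = d π_d ∫_0^r exp(-ρ^d ω_d(t)) t^{d-1} dt`. -/
def Jint (r : ℝ) (d : ℕ) (ρ : ℝ) : ℝ :=
  d * unitBallVol d * ∫ t in (0:ℝ)..r, Real.exp (-(ρ ^ d * omegaVol d t)) * t ^ (d - 1)

/-- The limiting variance density `g_V(ρ)`. -/
def gV (d : ℕ) (ρ : ℝ) : ℝ :=
  ρ ^ d * Jint 2 d ρ - (2 ^ d * phi d ρ + phi d ρ ^ 2) * Real.exp (-(2 * phi d ρ))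

/-- The limiting variance density `g_S(ρ)`. -/
def gS (d : ℕ) (ρ : ℝ) : ℝ :=
  Real.exp (-phi d ρ) - (1 + (2 ^ d - 2) * phi d ρ + phi d ρ ^ 2) * Real.exp (-(2 * phi d ρ))
    + ρ ^ d * (Jint 2 d ρ - Jint 1 d ρ)

/-- `κ_d`: the maximum number of closed unit balls in `ℝ^d` that can be packed so that
they all intersect a closed unit ball at the origin but are pairwise disjoint. -/
def kappa (d : ℕ) : ℕ :=
  sSup {k : ℕ | ∃ c : Fin k → EuclideanSpace ℝ (Fin d),
    (∀ i, (Metric.closedBall (c i) 1 ∩ Metric.closedBall 0 1).Nonempty) ∧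
    Pairwise fun i j => Disjoint (Metric.closedBall (c i) 1) (Metric.closedBall (c j) 1)}

/-- `η_V(n, ρ)`. -/
def etaV (d n : ℕ) (ρ : ℝ) : ℝ :=
  2 * phi d ρ ^ 2 * ((3 ^ d + 1) * phi d ρ + 1) ^ 2 *
      (1 + (2 ^ d + 1) * 6 ^ d * phi d ρ +
        ((2 * n - 6 ^ d * phi d ρ) / (n - 6 ^ d * phi d ρ)) * 6 ^ (2 * d) * phi d ρ ^ 2) +
    2 * phi d ρ ^ 4 *
      (3 * (4 ^ d + 2 ^ d) * phi d ρ +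
        3 * 4 ^ d * phi d ρ ^ 2 * ((2 * n - 3 * 2 ^ d * phi d ρ) / (n - 3 * 2 ^ d * phi d ρ)) +
        4 + 2 / n)

/-- `η_S(n, ρ)`. -/
def etaS (d n : ℕ) (ρ : ℝ) : ℝ :=
  2 * (1 + 2 * (kappa d : ℝ)) ^ 2 *
      (1 + (2 ^ d + 1) * 3 ^ d * phi d ρ +
        ((2 * n - 3 ^ d * phi d ρ) / (n - 3 ^ d * phi d ρ)) * 9 ^ d * phi d ρ ^ 2) +
    (((1 : ℝ) + kappa d) ^ 2 / 2) *
      ((2 ^ d + 2 * 3 ^ d + 3) * phi d ρ +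
        (2 ^ (d + 1) + 1) *
          ((2 * n - (2 ^ (d + 1) + 1) * phi d ρ) / (n - (2 ^ (d + 1) + 1) * phi d ρ)) *
          phi d ρ ^ 2 +
        (4 * n - 2) / (n - 1))

/-!
Write `T n k = P[Bin(n,p) ≥ k]`. The three tails are `P[N ≥ k] = T m k`,
`P[N' ≥ k+1] = T m (k+1) / T m 1` and `P[N'' ≥ k+1] = T (m-1) k`, so the first inequality is
`T m 1 ≤ 1` and the second is `T m (k+1) ≤ T m 1 * T (m-1) k`. By Pascal's rule
`T (n+1) (k+1) = p T n k + (1-p) T n (k+1)`, the latter reduces to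
`T n (k+1) ≤ T n 1 * T n k`, which follows by induction on `n` from the same rule and the
monotonicity `T n k ≤ T (n+1) k`.

The variables are not assumed measurable, so the tails are recovered from the point masses using
only countable subadditivity of `P`.
-/

def binomTerm (p : ℝ) (n j : ℕ) : ℝ := n.choose j * p ^ j * (1 - p) ^ (n - j)

/-- `binomTail p n k = P[Bin(n,p) ≥ k]`; terms with `j + k > n` vanish. -/
def binomTail (p : ℝ) (n k : ℕ) : ℝ := ∑ j ∈ Finset.range (n + 1), binomTerm p n (j + k)

section Binomial

variable {p : ℝ}

lemma binomTerm_nonneg (hp0 : 0 ≤ p) (hp1 : p ≤ 1) (n j : ℕ) : 0 ≤ binomTerm p n j := by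
  have : 0 ≤ 1 - p := by linarith
  unfold binomTerm
  positivity

lemma binomTerm_eq_zero_of_lt {n j : ℕ} (h : n < j) : binomTerm p n j = 0 := by
  simp [binomTerm, Nat.choose_eq_zero_of_lt h]

lemma binomTerm_succ_succ (n j : ℕ) :
    binomTerm p (n + 1) (j + 1) = p * binomTerm p n j + (1 - p) * binomTerm p n (j + 1) := by
  simp only [binomTerm, Nat.choose_succ_succ, Nat.add_sub_add_right, Nat.cast_add]
  rcases lt_or_ge j n with hjn | hnj
  · rw [show n - j = n - (j + 1) + 1 by omega]
    ring
  · rw [Nat.choose_eq_zero_of_lt (by omega : n < j + 1), Nat.sub_eq_zero_of_le hnj]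
    ring

lemma sum_range_binomTerm_add {n N : ℕ} (hN : n + 1 ≤ N) (k : ℕ) :
    ∑ j ∈ Finset.range N, binomTerm p n (j + k) = binomTail p n k := by
  refine (Finset.sum_subset (Finset.range_subset_range.2 hN) fun j _ hj => ?_).symm
  exact binomTerm_eq_zero_of_lt (by simp at hj; omega)

lemma binomTail_nonneg (hp0 : 0 ≤ p) (hp1 : p ≤ 1) (n k : ℕ) : 0 ≤ binomTail p n k :=
  Finset.sum_nonneg fun j _ => binomTerm_nonneg hp0 hp1 n (j + k)

lemma binomTail_zero (n : ℕ) : binomTail p n 0 = 1 := by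
  have h := (add_pow p (1 - p) n).symm
  rw [add_sub_cancel, one_pow] at h
  rw [← h, binomTail]
  exact Finset.sum_congr rfl fun j _ => by rw [binomTerm, add_zero]; ring

lemma binomTail_eq_add (n k : ℕ) : binomTail p n k = binomTerm p n k + binomTail p n (k + 1) := by
  rw [← sum_range_binomTerm_add (n + 1).le_succ, Finset.sum_range_succ',
    zero_add, add_comm]
  simp only [add_right_comm _ 1 k, add_assoc]
  rfl

lemma binomTail_succ_le (hp0 : 0 ≤ p) (hp1 : p ≤ 1) (n k : ℕ) :
    binomTail p n (k + 1) ≤ binomTail p n k := by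
  rw [binomTail_eq_add n k]
  linarith [binomTerm_nonneg hp0 hp1 n k]

lemma binomTail_one (n : ℕ) : binomTail p n 1 = 1 - (1 - p) ^ n := by
  have h := binomTail_eq_add (p := p) n 0
  rw [binomTail_zero, binomTerm] at h
  simp only [Nat.choose_zero_right, Nat.cast_one, pow_zero, one_mul, Nat.sub_zero] at h
  linarith

lemma binomTail_succ_succ (n k : ℕ) :
    binomTail p (n + 1) (k + 1) = p * binomTail p n k + (1 - p) * binomTail p n (k + 1) := by
  rw [← sum_range_binomTerm_add (n := n) (n + 1).le_succ,
    ← sum_range_binomTerm_add (n := n) (n + 1).le_succ, binomTail, Finset.mul_sum, Finset.mul_sum,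
    ← Finset.sum_add_distrib]
  refine Finset.sum_congr rfl fun j _ => ?_
  rw [← add_assoc, binomTerm_succ_succ, add_assoc]

lemma binomTail_le_succ (hp0 : 0 ≤ p) (hp1 : p ≤ 1) (n k : ℕ) :
    binomTail p n k ≤ binomTail p (n + 1) k := by
  cases k with
  | zero => rw [binomTail_zero, binomTail_zero]
  | succ k =>
    rw [binomTail_succ_succ]
    nlinarith [binomTail_succ_le hp0 hp1 n k]

lemma binomTail_succ_succ_le_of_le (hp1 : p ≤ 1) {n k : ℕ}
    (h : binomTail p n (k + 1) ≤ binomTail p n 1 * binomTail p n k) :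
    binomTail p (n + 1) (k + 1) ≤ binomTail p (n + 1) 1 * binomTail p n k := by
  have hq : 0 ≤ 1 - p := by linarith
  calc binomTail p (n + 1) (k + 1)
      = p * binomTail p n k + (1 - p) * binomTail p n (k + 1) := binomTail_succ_succ n k
    _ ≤ p * binomTail p n k + (1 - p) * (binomTail p n 1 * binomTail p n k) := by gcongr
    _ = (p * binomTail p n 0 + (1 - p) * binomTail p n 1) * binomTail p n k := by
        rw [binomTail_zero]; ring
    _ = binomTail p (n + 1) 1 * binomTail p n k := by rw [← binomTail_succ_succ]

/-- Harris-type inequality `P[N ≥ k+1] ≤ P[N ≥ 1] P[N ≥ k]` for `N ∼ Bin(n,p)`. -/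
lemma binomTail_succ_le_mul (hp0 : 0 ≤ p) (hp1 : p ≤ 1) (n k : ℕ) :
    binomTail p n (k + 1) ≤ binomTail p n 1 * binomTail p n k := by
  induction n generalizing k with
  | zero =>
    rw [binomTail, Finset.sum_range_one, binomTerm_eq_zero_of_lt (by omega)]
    exact mul_nonneg (binomTail_nonneg hp0 hp1 0 1) (binomTail_nonneg hp0 hp1 0 k)
  | succ n ih =>
    calc binomTail p (n + 1) (k + 1) ≤ binomTail p (n + 1) 1 * binomTail p n k :=
          binomTail_succ_succ_le_of_le hp1 (ih k)
      _ ≤ binomTail p (n + 1) 1 * binomTail p (n + 1) k := by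
          gcongr
          · exact binomTail_nonneg hp0 hp1 (n + 1) 1
          · exact binomTail_le_succ hp0 hp1 n k

lemma binomTail_succ_succ_le_mul (hp0 : 0 ≤ p) (hp1 : p ≤ 1) (n k : ℕ) :
    binomTail p (n + 1) (k + 1) ≤ binomTail p (n + 1) 1 * binomTail p n k :=
  binomTail_succ_succ_le_of_le hp1 (binomTail_succ_le_mul hp0 hp1 n k)

lemma tsum_ofReal_binomTerm_add (hp0 : 0 ≤ p) (hp1 : p ≤ 1) (n k : ℕ) :
    ∑' j, ENNReal.ofReal (binomTerm p n (j + k)) = ENNReal.ofReal (binomTail p n k) := by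
  rw [tsum_eq_sum (s := Finset.range (n + 1)) fun j hj => by
      rw [binomTerm_eq_zero_of_lt (by simp at hj; omega), ENNReal.ofReal_zero],
    ← ENNReal.ofReal_sum_of_nonneg fun j _ => binomTerm_nonneg hp0 hp1 n (j + k), binomTail]

end Binomial

section PointMasses

variable {Ω : Type*} [MeasurableSpace Ω] {P : Measure Ω}

lemma measure_le_eq_tsum [IsProbabilityMeasure P] {N : Ω → ℕ}
    (h : ∑' j, P {ω | N ω = j} = 1) (k : ℕ) :
    P {ω | k ≤ N ω} = ∑' j, P {ω | N ω = j + k} := by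
  apply le_antisymm
  · have hcover : {ω | k ≤ N ω} = ⋃ j, {ω | N ω = j + k} := by
      ext ω
      simp only [mem_ofPred_eq, mem_iUnion]
      exact ⟨fun h => ⟨N ω - k, by omega⟩, fun ⟨j, hj⟩ => by omega⟩
    rw [hcover]
    exact measure_iUnion_le _
  · have hfin : ∑ j ∈ Finset.range k, P {ω | N ω = j} ≠ ⊤ :=
      ENNReal.sum_ne_top.2 fun _ _ => measure_ne_top _ _
    have hcover : univ ⊆ (⋃ j ∈ Finset.range k, {ω | N ω = j}) ∪ {ω | k ≤ N ω} := by
      intro ω _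
      by_cases hk : k ≤ N ω
      · exact Or.inr hk
      · exact Or.inl (mem_biUnion (Finset.mem_range.2 (by omega)) rfl)
    refine ENNReal.le_of_add_le_add_left hfin ?_
    calc ∑ j ∈ Finset.range k, P {ω | N ω = j} + ∑' j, P {ω | N ω = j + k}
        = P univ := by rw [ENNReal.summable.sum_add_tsum_nat_add', h, measure_univ]
      _ ≤ P (⋃ j ∈ Finset.range k, {ω | N ω = j}) + P {ω | k ≤ N ω} :=
          (measure_mono hcover).trans (measure_union_le _ _)
      _ ≤ ∑ j ∈ Finset.range k, P {ω | N ω = j} + P {ω | k ≤ N ω} := by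
          gcongr
          exact measure_biUnion_finset_le _ _

/-- `M` has the law of `N` conditioned on `N > 0`. -/
lemma measure_succ_le_mul_eq_of_cond [IsProbabilityMeasure P] {N M : Ω → ℕ}
    (hN : ∑' j, P {ω | N ω = j} = 1) (hpos : P {ω | 0 < N ω} ≠ 0)
    (hM0 : P {ω | M ω = 0} = 0)
    (hM : ∀ j, 1 ≤ j → P {ω | M ω = j} * P {ω | 0 < N ω} = P {ω | N ω = j}) (k : ℕ) :
    P {ω | k + 1 ≤ M ω} * P {ω | 0 < N ω} = P {ω | k + 1 ≤ N ω} := by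
  have hshift : ∀ k : ℕ, (∑' j, P {ω | M ω = j + (k + 1)}) * P {ω | 0 < N ω}
      = P {ω | k + 1 ≤ N ω} := fun k => by
    rw [← ENNReal.tsum_mul_right, measure_le_eq_tsum hN]
    exact tsum_congr fun j => hM _ (by omega)
  have hM1 : ∑' j, P {ω | M ω = j} = 1 := by
    rw [tsum_eq_zero_add' ENNReal.summable, hM0, zero_add,
      ← ENNReal.mul_eq_right hpos (measure_ne_top _ _)]
    exact hshift 0
  rw [measure_le_eq_tsum hM1, hshift]

variable {p : ℝ}

lemma tsum_measure_eq_one_of_binomial (hp0 : 0 ≤ p) (hp1 : p ≤ 1) {N : Ω → ℕ} {n : ℕ}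
    (hN : ∀ j, P {ω | N ω = j} = ENNReal.ofReal (binomTerm p n j)) :
    ∑' j, P {ω | N ω = j} = 1 := by
  simpa [hN, binomTail_zero] using tsum_ofReal_binomTerm_add hp0 hp1 n 0

lemma measure_le_eq_binomTail [IsProbabilityMeasure P] (hp0 : 0 ≤ p) (hp1 : p ≤ 1)
    {N : Ω → ℕ} {n : ℕ} (hN : ∀ j, P {ω | N ω = j} = ENNReal.ofReal (binomTerm p n j))
    (k : ℕ) :
    P {ω | k ≤ N ω} = ENNReal.ofReal (binomTail p n k) := by
  rw [measure_le_eq_tsum (tsum_measure_eq_one_of_binomial hp0 hp1 hN)]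
  simp_rw [hN]
  exact tsum_ofReal_binomTerm_add hp0 hp1 n k

lemma measure_succ_le_eq_binomTail [IsProbabilityMeasure P] (hp0 : 0 ≤ p) (hp1 : p ≤ 1)
    {M : Ω → ℕ} {n : ℕ} (hM0 : P {ω | M ω = 0} = 0)
    (hM : ∀ j, P {ω | M ω = j + 1} = ENNReal.ofReal (binomTerm p n j)) (k : ℕ) :
    P {ω | k + 1 ≤ M ω} = ENNReal.ofReal (binomTail p n k) := by
  have hshift :
      ∀ k : ℕ, ∑' j, P {ω | M ω = j + (k + 1)} = ENNReal.ofReal (binomTail p n k) :=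
    fun k => by
      simp_rw [← add_assoc, hM]
      exact tsum_ofReal_binomTerm_add hp0 hp1 n k
  have hM1 : ∑' j, P {ω | M ω = j} = 1 := by
    rw [tsum_eq_zero_add' ENNReal.summable, hM0, zero_add]
    simpa [binomTail_zero] using hshift 0
  rw [measure_le_eq_tsum hM1, hshift]

end PointMasses

/-- Lemma 3.2 (Goldstein–Penrose): a binomial variable conditioned to be positive is
stochastically between the binomial and one plus a binomial with one fewer trial.
Here `N ∼ Bin(m,p)`, `N'` has the conditional distribution of `N` given `N > 0`
(so that `P[N' = j] P[N > 0] = P[N = j]` for `j ≥ 1` and `P[N' = 0] = 0`), and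
`N'' - 1 ∼ Bin(m-1,p)`. -/
theorem binomial_conditioned_stochastic_bounds
    {Ω : Type*} [MeasurableSpace Ω] (P : Measure Ω) [IsProbabilityMeasure P]
    (m : ℕ) (hm : 1 ≤ m) (p : ℝ) (hp : p ∈ Set.Ioo (0 : ℝ) 1)
    (N N' N'' : Ω → ℕ)
    (hN : ∀ k : ℕ, (P {ω | N ω = k}).toReal = m.choose k * p ^ k * (1 - p) ^ (m - k))
    (hN' : ∀ k : ℕ, 1 ≤ k →
      (P {ω | N' ω = k}).toReal * (P {ω | 0 < N ω}).toReal = (P {ω | N ω = k}).toReal)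
    (hN'0 : P {ω | N' ω = 0} = 0)
    (hN'' : ∀ k : ℕ, (P {ω | N'' ω = k + 1}).toReal =
      (m - 1).choose k * p ^ k * (1 - p) ^ (m - 1 - k))
    (hN''0 : P {ω | N'' ω = 0} = 0)
    (k : ℕ) :
    P {ω | k ≤ N ω} ≤ P {ω | k ≤ N' ω} ∧ P {ω | k ≤ N' ω} ≤ P {ω | k ≤ N'' ω} := by
  obtain ⟨hp0, hp1⟩ := hp
  obtain ⟨n, rfl⟩ : ∃ n, m = n + 1 := ⟨m - 1, by omega⟩
  have hNj : ∀ j, P {ω | N ω = j} = ENNReal.ofReal (binomTerm p (n + 1) j) := fun j => by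
    rw [binomTerm, ← hN j, ENNReal.ofReal_toReal (measure_ne_top _ _)]
  have hN''j : ∀ j, P {ω | N'' ω = j + 1} = ENNReal.ofReal (binomTerm p n j) := fun j => by
    rw [binomTerm, show n = n + 1 - 1 from rfl, ← hN'' j,
      ENNReal.ofReal_toReal (measure_ne_top _ _)]
  have hpos : P {ω | 0 < N ω} = ENNReal.ofReal (binomTail p (n + 1) 1) :=
    measure_le_eq_binomTail hp0.le hp1.le hNj 1
  have hpos_ne : P {ω | 0 < N ω} ≠ 0 := by
    rw [hpos, binomTail_one]
    refine (ENNReal.ofReal_pos.2 (sub_pos.2 (pow_lt_one₀ ?_ ?_ n.succ_ne_zero))).ne' <;> linarith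
  have hN'j : ∀ j, 1 ≤ j → P {ω | N' ω = j} * P {ω | 0 < N ω} = P {ω | N ω = j} := by
    intro j hj
    rw [← ENNReal.toReal_eq_toReal_iff' (by finiteness) (measure_ne_top _ _), ENNReal.toReal_mul]
    exact hN' j hj
  have hcond := measure_succ_le_mul_eq_of_cond
    (tsum_measure_eq_one_of_binomial hp0.le hp1.le hNj) hpos_ne hN'0 hN'j
  cases k with
  | zero => simp
  | succ k =>
    constructor
    · rw [← hcond k]
      exact mul_le_of_le_one_right' prob_le_one
    · rw [← ENNReal.mul_le_mul_iff_left hpos_ne (measure_ne_top _ _), hcond k,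
        measure_le_eq_binomTail hp0.le hp1.le hNj,
        measure_succ_le_eq_binomTail hp0.le hp1.le hN''0 hN''j, hpos,
        ← ENNReal.ofReal_mul (binomTail_nonneg hp0.le hp1.le n k), mul_comm]
      exact ENNReal.ofReal_le_ofReal (binomTail_succ_succ_le_mul hp0.le hp1.le n k)

end
end

section
/- Suppose Y is a random variable given by Y = a P[A | ℱ], where ℱ is a σ-algebra, a > 0 is a constant, and A is an event with 0 < P[A] < 1. If Y' is a random variable whose distribution equals the conditional distribution of Y given A, then Y' has the Y size-biased distribution. -/
open MeasureTheory ProbabilityTheory Filter Set Metric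
open scoped ENNReal NNReal BigOperators Topology Classical

noncomputable section

/-!
Since `Y` is `ℱ`-measurable, so is `g ∘ Y`, and the pull-out property of conditional expectation
gives `E[Y g(Y)] = a E[g(Y) P[A | ℱ]] = a E[g(Y); A] = a P(A) E[g(Y) | A]`. The mean is the case
`g = 1`, `E Y = a P(A)`, and `E[g(Y) | A] = E g(Y')` because `Y'` has the law of `Y` under `P[· | A]`.
-/

namespace MeasureTheory

variable {Ω : Type*} {m mΩ : MeasurableSpace Ω} {μ : Measure Ω}

lemma integral_mul_condExp_of_bound (hm : m ≤ mΩ) [IsFiniteMeasure μ] {f g : Ω → ℝ}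
    (hf : StronglyMeasurable[m] f) (hg : Integrable g μ) (c : ℝ)
    (hf_bound : ∀ᵐ ω ∂μ, ‖f ω‖ ≤ c) :
    ∫ ω, f ω * μ[g|m] ω ∂μ = ∫ ω, f ω * g ω ∂μ := by
  calc ∫ ω, f ω * μ[g|m] ω ∂μ = ∫ ω, μ[f * g|m] ω ∂μ :=
        integral_congr_ae (condExp_stronglyMeasurable_mul_of_bound hm hf hg c hf_bound).symm
    _ = ∫ ω, f ω * g ω ∂μ := integral_condExp hm

lemma integral_mul_condExp_indicator_of_bound (hm : m ≤ mΩ) [IsFiniteMeasure μ] {f : Ω → ℝ}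
    (hf : StronglyMeasurable[m] f) (c : ℝ) (hf_bound : ∀ᵐ ω ∂μ, ‖f ω‖ ≤ c)
    {s : Set Ω} (hs : MeasurableSet s) :
    ∫ ω, f ω * μ[s.indicator (fun _ ↦ (1 : ℝ))|m] ω ∂μ = ∫ ω in s, f ω ∂μ := by
  rw [integral_mul_condExp_of_bound hm hf ((integrable_const 1).indicator hs) c hf_bound,
    ← integral_indicator hs]
  congr 1 with ω
  by_cases hω : ω ∈ s <;> simp [hω]

end MeasureTheory

namespace ProbabilityTheory

variable {Ω : Type*} {mΩ : MeasurableSpace Ω} {μ : Measure Ω}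

lemma measure_smul_cond [IsFiniteMeasure μ] (s : Set Ω) : μ s • μ[|s] = μ.restrict s := by
  rcases eq_or_ne (μ s) 0 with hs | hs
  · simp [hs, Measure.restrict_eq_zero.mpr hs]
  · rw [cond, smul_smul, ENNReal.mul_inv_cancel hs (measure_ne_top μ s), one_smul]

lemma measureReal_mul_integral_cond [IsFiniteMeasure μ] (s : Set Ω) (f : Ω → ℝ) :
    μ.real s * ∫ ω, f ω ∂μ[|s] = ∫ ω in s, f ω ∂μ := by
  rw [← measure_smul_cond s, integral_smul_measure, smul_eq_mul, measureReal_def]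

end ProbabilityTheory

theorem cond_prob_size_bias_general
    {Ω : Type*} [mΩ : MeasurableSpace Ω] (P : Measure Ω) [IsProbabilityMeasure P]
    (F : MeasurableSpace Ω) (hF : F ≤ mΩ)
    (A : Set Ω) (hA : MeasurableSet[mΩ] A)
    (a : ℝ)
    (Y : Ω → ℝ)
    (hY : Y = fun ω => a * (P[A.indicator (fun _ => (1 : ℝ))|F]) ω)
    {Ω' : Type*} [MeasurableSpace Ω'] (P' : Measure Ω')
    (Y' : Ω' → ℝ) (hY'meas : Measurable Y')
    (hY'dist : Measure.map Y' P' = @Measure.map Ω ℝ mΩ _ Y (@ProbabilityTheory.cond Ω mΩ P A)) :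
    ∀ g : ℝ → ℝ, Continuous g → (∃ C, ∀ x, |g x| ≤ C) →
      ∫ ω, Y ω * g (Y ω) ∂P = (∫ ω, Y ω ∂P) * ∫ ω', g (Y' ω') ∂P' := by
  rintro g hg ⟨C, hC⟩
  have hYF : StronglyMeasurable[F] Y := hY ▸ stronglyMeasurable_condExp.const_mul a
  have hgY_bound : ∀ᵐ ω ∂P, ‖g (Y ω)‖ ≤ C := .of_forall fun ω ↦ hC (Y ω)
  have hmean : ∫ ω, Y ω ∂P = a * P.real A := by
    rw [hY, integral_const_mul, integral_condExp hF, integral_indicator hA,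
      setIntegral_const, smul_eq_mul, mul_one]
  have hbiased : ∫ ω, Y ω * g (Y ω) ∂P = a * ∫ ω in A, g (Y ω) ∂P := by
    rw [← integral_mul_condExp_indicator_of_bound hF (hg.comp_stronglyMeasurable hYF) C hgY_bound
      hA, ← integral_const_mul]
    congr 1 with ω
    rw [hY]
    ring
  have hlaw : ∫ ω', g (Y' ω') ∂P' = ∫ ω, g (Y ω) ∂P[|A] := by
    rw [← integral_map hY'meas.aemeasurable hg.aestronglyMeasurable, hY'dist,
      integral_map (hYF.mono hF).measurable.aemeasurable hg.aestronglyMeasurable]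
  rw [hbiased, hmean, hlaw, mul_assoc, measureReal_mul_integral_cond]

/-- Lemma 4.1 (Goldstein–Penrose): size-biasing a conditional probability.
If `Y = a P[A|ℱ]` and `Y'` has the conditional distribution of `Y` given `A`,
then `Y'` has the `Y` size-biased distribution. -/
theorem cond_prob_size_bias
    {Ω : Type*} [mΩ : MeasurableSpace Ω] (P : Measure Ω) [IsProbabilityMeasure P]
    (F : MeasurableSpace Ω) (hF : F ≤ mΩ)
    (A : Set Ω) (hA : MeasurableSet[mΩ] A) (hA0 : 0 < P A) (hA1 : P A < 1)
    (a : ℝ) (ha : 0 < a)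
    (Y : Ω → ℝ)
    (hY : Y = fun ω => a * (P[A.indicator (fun _ => (1 : ℝ))|F]) ω)
    {Ω' : Type*} [MeasurableSpace Ω'] (P' : Measure Ω') [IsProbabilityMeasure P']
    (Y' : Ω' → ℝ) (hY'meas : Measurable Y')
    (hY'dist : Measure.map Y' P' = @Measure.map Ω ℝ mΩ _ Y (@ProbabilityTheory.cond Ω mΩ P A)) :
    ∀ g : ℝ → ℝ, Continuous g → (∃ C, ∀ x, |g x| ≤ C) →
      ∫ ω, Y ω * g (Y ω) ∂P = (∫ ω, Y ω ∂P) * ∫ ω', g (Y' ω') ∂P' :=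
  cond_prob_size_bias_general (mΩ := mΩ) P F hF A hA a Y hY P' Y' hY'meas hY'dist

end
end

section
/- Let X be an integer-valued random variable with SD(X) = σ ∈ (0, ∞). Then D_X ≥ (1/2) σ^{−1} f_Z(σ^{−1}), where f_Z(t) = (2π)^{−1/2} e^{−t²/2} is the standard normal density. -/
open MeasureTheory ProbabilityTheory Filter Set Metric
open scoped ENNReal NNReal BigOperators Topology Classical

noncomputable section

/-! An integer-valued `X` has a standardized distribution function `F` that is constant on a
stretch `[a, b)` of length `σ⁻¹` around `0`, namely where `m + σ t` stays between `⌊m⌋` and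
`⌊m⌋ + 1`. Across that stretch the normal distribution function `Φ` grows by at least
`σ⁻¹ f_Z(σ⁻¹)`, since `[a, b] ⊆ [-σ⁻¹, σ⁻¹]`. A constant cannot be within `D` of both `Φ a` and
`Φ b⁻ = Φ b`, unless `Φ b - Φ a ≤ 2 D`. -/

lemma ProbabilityTheory.gaussianPDFReal_le_of_sq_le (μ : ℝ) (v : ℝ≥0) {x y : ℝ}
    (h : (x - μ) ^ 2 ≤ (y - μ) ^ 2) : gaussianPDFReal μ v y ≤ gaussianPDFReal μ v x := by
  rw [gaussianPDFReal, gaussianPDFReal]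
  gcongr

lemma ProbabilityTheory.gaussianPDFReal_zero_one (x : ℝ) :
    gaussianPDFReal 0 1 x = (Real.sqrt (2 * Real.pi))⁻¹ * Real.exp (-x ^ 2 / 2) := by
  simp [gaussianPDFReal]

lemma stdGaussCDF_eq_integral (t : ℝ) :
    stdGaussCDF t = ∫ x in Iic t, gaussianPDFReal 0 1 x := by
  rw [stdGaussCDF, gaussianReal_apply_eq_integral 0 one_ne_zero,
    ENNReal.toReal_ofReal (integral_nonneg fun x => gaussianPDFReal_nonneg _ _ _)]

lemma stdGaussCDF_sub_stdGaussCDF (a b : ℝ) :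
    stdGaussCDF b - stdGaussCDF a = ∫ x in a..b, gaussianPDFReal 0 1 x := by
  simp only [stdGaussCDF_eq_integral]
  exact intervalIntegral.integral_Iic_sub_Iic (integrable_gaussianPDFReal 0 1).integrableOn
    (integrable_gaussianPDFReal 0 1).integrableOn

lemma stdGaussCDF_nonneg (t : ℝ) : 0 ≤ stdGaussCDF t := ENNReal.toReal_nonneg

lemma stdGaussCDF_le_one (t : ℝ) : stdGaussCDF t ≤ 1 := measureReal_le_one

lemma continuous_stdGaussCDF : Continuous stdGaussCDF := by
  rw [funext stdGaussCDF_eq_integral, continuous_iff_continuousAt]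
  intro t
  exact ((integrable_gaussianPDFReal 0 1).integrableOn.continuousOn_Iic_primitive_Iic
    (a₀ := t + 1)).continuousAt (Iic_mem_nhds (lt_add_one t))

lemma mul_gaussianPDFReal_le_stdGaussCDF_sub {a b r : ℝ} (hab : a ≤ b) (hra : -r ≤ a)
    (hbr : b ≤ r) : (b - a) * gaussianPDFReal 0 1 r ≤ stdGaussCDF b - stdGaussCDF a := by
  rw [stdGaussCDF_sub_stdGaussCDF, ← smul_eq_mul, ← intervalIntegral.integral_const]
  refine intervalIntegral.integral_mono_on hab intervalIntegrable_const
    (integrable_gaussianPDFReal 0 1).intervalIntegrable fun x hx => ?_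
  refine gaussianPDFReal_le_of_sq_le 0 1 ?_
  simpa using sq_le_sq' (by linarith [hx.1]) (by linarith [hx.2])

lemma sub_le_two_mul_of_const_on_Ico {F G : ℝ → ℝ} {a b D : ℝ} (hab : a < b)
    (hF : ∀ t ∈ Ico a b, F t = F a) (hG : ContinuousWithinAt G (Iio b) b)
    (hD : ∀ t, |F t - G t| ≤ D) : G b - G a ≤ 2 * D := by
  have hDb : |F a - G b| ≤ D := by
    refine le_of_tendsto (tendsto_const_nhds.sub hG).abs ?_
    filter_upwards [Ioo_mem_nhdsLT hab] with t ht
    rw [← hF t (Ioo_subset_Ico_self ht)]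
    exact hD t
  linarith [abs_le.1 hDb, abs_le.1 (hD a)]

lemma setOf_sub_div_le_eq_setOf_le_floor {Ω : Type*} {X : Ω → ℝ}
    (hX : ∀ ω, ∃ k : ℤ, X ω = k) (m : ℝ) {σ : ℝ} (hσ : 0 < σ) (t : ℝ) :
    {ω | (X ω - m) / σ ≤ t} = {ω | X ω ≤ ⌊m + σ * t⌋} := by
  ext ω
  obtain ⟨j, hj⟩ := hX ω
  simp only [mem_ofPred_eq, hj]
  rw [div_le_iff₀ hσ, sub_le_iff_le_add', mul_comm t, Int.cast_le, Int.le_floor]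

lemma setOf_sub_div_le_eq_of_mem_Ico {Ω : Type*} {X : Ω → ℝ}
    (hX : ∀ ω, ∃ k : ℤ, X ω = k) (m : ℝ) {σ : ℝ} (hσ : 0 < σ) {k : ℤ} {t : ℝ}
    (ht : t ∈ Ico ((k - m) / σ) ((k + 1 - m) / σ)) :
    {ω | (X ω - m) / σ ≤ t} = {ω | (X ω - m) / σ ≤ (k - m) / σ} := by
  have hfloor : ⌊m + σ * t⌋ = k := by
    rw [mem_Ico, div_le_iff₀ hσ, lt_div_iff₀ hσ] at ht
    rw [Int.floor_eq_iff]
    constructor <;> linarith [ht.1, ht.2]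
  have hk : m + σ * ((k - m) / σ) = k := by field_simp; ring
  rw [setOf_sub_div_le_eq_setOf_le_floor hX m hσ, setOf_sub_div_le_eq_setOf_le_floor hX m hσ,
    hfloor, hk, Int.floor_intCast]

lemma abs_sub_stdGaussCDF_le_kolDist {Ω : Type*} [MeasurableSpace Ω] (P : Measure Ω)
    [IsProbabilityMeasure P] (X : Ω → ℝ) (t : ℝ) :
    |(P {ω | (X ω - ∫ x, X x ∂P) / Real.sqrt (variance X P) ≤ t}).toReal - stdGaussCDF t|
      ≤ kolDist P X := by
  set F : ℝ → ℝ := fun s => (P {ω | (X ω - ∫ x, X x ∂P) / Real.sqrt (variance X P) ≤ s}).toReal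
  have hbdd : BddAbove (range fun s => |F s - stdGaussCDF s|) := by
    refine ⟨1, ?_⟩
    rintro _ ⟨s, rfl⟩
    exact abs_sub_le_of_nonneg_of_le ENNReal.toReal_nonneg measureReal_le_one
      (stdGaussCDF_nonneg s) (stdGaussCDF_le_one s)
  exact le_ciSup hbdd t

/-- The lower-bound argument in the proof of (3.7) of Goldstein–Penrose: for any
integer-valued random variable `X` with standard deviation `σ ∈ (0,∞)`,
`D_X ≥ (1/2) σ⁻¹ f_Z(σ⁻¹)` where `f_Z` is the standard normal density. -/
theorem integer_valued_kolDist_lower_bound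
    {Ω : Type*} [MeasurableSpace Ω] (P : Measure Ω) [IsProbabilityMeasure P]
    (X : Ω → ℝ) (hint : ∀ ω, ∃ k : ℤ, X ω = k)
    (hvar : 0 < variance X P) :
    (1 / 2) * (Real.sqrt (variance X P))⁻¹ *
        ((Real.sqrt (2 * Real.pi))⁻¹ *
          Real.exp (-((Real.sqrt (variance X P))⁻¹) ^ 2 / 2)) ≤
      kolDist P X := by
  set σ := Real.sqrt (variance X P)
  set m := ∫ x, X x ∂P
  have hσ : 0 < σ := Real.sqrt_pos.2 hvar
  set a := (⌊m⌋ - m) / σ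
  set b := (⌊m⌋ + 1 - m) / σ
  have hba : b - a = σ⁻¹ := by simp only [a, b]; field_simp; ring
  have ha : -σ⁻¹ ≤ a := by
    rw [neg_le, ← neg_div, ← one_div]
    exact div_le_div_of_nonneg_right (by linarith [Int.lt_floor_add_one m]) hσ.le
  have hb : b ≤ σ⁻¹ := by
    rw [← one_div]
    exact div_le_div_of_nonneg_right (by linarith [Int.floor_le m]) hσ.le
  have hgap := mul_gaussianPDFReal_le_stdGaussCDF_sub (by linarith) ha hb
  have hjump := sub_le_two_mul_of_const_on_Ico (a := a) (b := b) (by linarith [inv_pos.2 hσ])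
    (fun t ht => by rw [setOf_sub_div_le_eq_of_mem_Ico hint m hσ (k := ⌊m⌋) ht])
    continuous_stdGaussCDF.continuousWithinAt (abs_sub_stdGaussCDF_le_kolDist P X)
  rw [hba] at hgap
  rw [← gaussianPDFReal_zero_one]
  linarith

end
end
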